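/- arXiv:2308.01422 — 2 statements merged into one kernel-verified Lean document; each statement's English description precedes it below -/
import Mathlib

section
/- LPO and LLPO are *-irreducible with respect to continuous Weihrauch degrees: if f and g are problems with LPO ≡*_W f * g, then LPO ≡*_W f or LPO ≡*_W g; likewise, if LLPO ≡*_W f * g, then LLPO ≡*_W f or LLPO ≡*_W g. -/
/-- Baire space. -/
abbrev Baire := ℕ → ℕ

/-- A problem: a partial multivalued function on Baire space, given as the
solution-set map; the domain is the set of instances with nonempty solution set. -/
def Problem := Baire → Set Baire

/-- Domain of a problem. -/
def Dom (f : Problem) : Set Baire := {x | (f x).Nonempty}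

/-- A standard computable pairing of two sequences (interleaving). -/
def pair (x y : Baire) : Baire := fun n => if n % 2 = 0 then x (n / 2) else y (n / 2)

/-- Initial segment of length `m` of a sequence. -/
def initSeg (x : Baire) (m : ℕ) : List ℕ := (List.range m).map x

/-- `F` is (the restriction to `D` of) a partial computable function on Baire space:
there is a computable monotone oracle functional computing `F x` from prefixes of `x`,
correctly and consistently, for every `x ∈ D`. -/
def ComputableOn (F : Baire → Baire) (D : Set Baire) : Prop :=
  ∃ φ : List ℕ → ℕ → Option ℕ, Computable₂ φ ∧
    ∀ x ∈ D, ∀ n : ℕ,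
      (∃ m, φ (initSeg x m) n = some (F x n)) ∧
      (∀ m v, φ (initSeg x m) n = some v → v = F x n)

/-- Weihrauch reducibility `f ≤_W g`, with the partial computable forward functional `k`
defined on `Dom f` and the partial computable backward functional `h` defined on all
pairs `⟨x, y⟩` with `x ∈ Dom f` and `y` a `g`-solution of `k x`. -/
def WRed (f g : Problem) : Prop :=
  ∃ h k : Baire → Baire,
    ComputableOn k (Dom f) ∧
    ComputableOn h {p | ∃ x ∈ Dom f, ∃ y ∈ g (k x), p = pair x y} ∧
    ∀ x ∈ Dom f, k x ∈ Dom g ∧ ∀ y ∈ g (k x), h (pair x y) ∈ f x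

/-- Weihrauch equivalence. -/
def WEquiv (f g : Problem) : Prop := WRed f g ∧ WRed g f

/-- Continuous Weihrauch reducibility `f ≤*_W g`: as `WRed` but the functionals
need only be partial continuous (continuous on their domains, Baire space carrying
the product topology). -/
def ContWRed (f g : Problem) : Prop :=
  ∃ h k : Baire → Baire,
    ContinuousOn k (Dom f) ∧
    ContinuousOn h {p | ∃ x ∈ Dom f, ∃ y ∈ g (k x), p = pair x y} ∧
    ∀ x ∈ Dom f, k x ∈ Dom g ∧ ∀ y ∈ g (k x), h (pair x y) ∈ f x

/-- Continuous Weihrauch equivalence. -/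
def ContWEquiv (f g : Problem) : Prop := ContWRed f g ∧ ContWRed g f

/-- Composition of problems: `dom (f ∘ g) = {x ∈ dom g : g x ⊆ dom f}` and
`(f ∘ g) x = {z : ∃ y ∈ g x, z ∈ f y}`. -/
def pcomp (f g : Problem) : Problem :=
  fun x => {z | g x ⊆ Dom f ∧ ∃ y ∈ g x, z ∈ f y}

/-- The identity problem. -/
def idp : Problem := fun x => {x}

/-- `p` is (a representative of) the compositional product `f * g`: the maximum,
with respect to `≤_W`, of `{f' ∘ g' : f' ≤_W f, g' ≤_W g}`. -/
def IsCompProd (f g p : Problem) : Prop :=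
  (∃ f' g', WRed f' f ∧ WRed g' g ∧ WEquiv p (pcomp f' g')) ∧
  (∀ f' g', WRed f' f → WRed g' g → WRed (pcomp f' g') p)

/-- `IsIter f n p` : `p` is (a representative of) `f^[n]`, the compositional product of
`n` copies of `f`, with `f^[0] := id`. -/
def IsIter (f : Problem) : ℕ → Problem → Prop
  | 0, p => p = idp
  | n + 1, p => ∃ q, IsIter f n q ∧ IsCompProd f q p

/-- The constant sequence with value `n`. -/
def cseq (n : ℕ) : Baire := fun _ => n

/-- The limited principle of omniscience. -/
def LPO : Problem := fun x =>
  {y | ((∃ n, x n = 0) ∧ y = cseq 0) ∨ ((∀ n, x n ≠ 0) ∧ y = cseq 1)}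

/-- The lesser limited principle of omniscience. -/
def LLPO : Problem := fun x =>
  {y | (∀ i j, x i ≠ 0 → x j ≠ 0 → i = j) ∧
       ((y = cseq 0 ∧ ∀ i, Even i → x i = 0) ∨
        (y = cseq 1 ∧ ∀ i, Odd i → x i = 0))}

/-- Turing reducibility between points of Baire space: `x` is computable from
oracle `y`. -/
def TuringLE (x y : Baire) : Prop :=
  ∃ φ : List ℕ → ℕ → Option ℕ, Computable₂ φ ∧
    ∀ n : ℕ, (∃ m, φ (initSeg y m) n = some (x n)) ∧
      (∀ m v, φ (initSeg y m) n = some v → v = x n)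

/-- Mutual Turing reducibility: `x` and `y` have the same Turing degree. -/
def TuringEquiv (x y : Baire) : Prop := TuringLE x y ∧ TuringLE y x

/-- Strict Turing reducibility. -/
def TuringLT (x y : Baire) : Prop := TuringLE x y ∧ ¬ TuringLE y x

/-- The problem `w_a`, for `a` a representative of a (non-zero) Turing degree. -/
def w (a : Baire) : Problem := fun x =>
  {y | (Computable x ∧ ¬ Computable y) ∨ (¬ Computable x ∧ TuringEquiv y a)}

/-- `k`-weak continuity of a problem. -/
def WeaklyContinuous (k : ℕ) (f : Problem) : Prop :=
  ∀ x ∈ Dom f, ∀ y : ℕ → Baire, (∀ n, y n ∈ Dom f) →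
    Filter.Tendsto y Filter.atTop (nhds x) →
    ∃ u ∈ f x, ∀ l < k, ∀ m : ℕ, ∃ n ≥ m,
      ∃ v ∈ f (y (n * k + l)), initSeg u m = initSeg v m

/-- Product of two problems. -/
def prodP (f g : Problem) : Problem := fun z =>
  {w | ∃ x y u v, z = pair x y ∧ w = pair u v ∧ u ∈ f x ∧ v ∈ g y}

/-- `powP f n` : the product of `n` copies of `f` (for `n ≥ 1`). -/
def powP (f : Problem) : ℕ → Problem
  | 0 => idp
  | 1 => f
  | n + 2 => prodP f (powP f (n + 1))

/-- A problem `f` is `k`-continuous: it has a realizer `r` (defined on a domain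
`D ⊇ Dom f`) together with a partition of `D` into at most `k` pieces (given by a
coloring `c`) such that `r` is continuous on each piece. -/
def kContinuous (k : ℕ) (f : Problem) : Prop :=
  ∃ (D : Set Baire) (r : Baire → Baire) (c : Baire → Fin k),
    Dom f ⊆ D ∧ (∀ x ∈ Dom f, r x ∈ f x) ∧
    ∀ i : Fin k, ContinuousOn r {x ∈ D | c x = i}

/-!
Both problems are decided by the first position at which the instance satisfies a test
(`x n = 0` for `LPO`, `x n ≠ 0` for `LLPO`), so after a continuous normalisation their instances
form a convergent sequence `test j → lim` with answers `ans j` along the sequence. Given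
`Q ≤*_W F ∘ G` through `(h, k)`, look at the `G`-solutions of `k (test j)`. If some `G`-solution
`y₀` of `k lim` is approached by `G`-solutions of `k (test i)` for arbitrarily late `i` of every
answer class, then `k` can be replaced by a continuous choice of these solutions, converging to
`y₀`, and `Q ≤*_W F`. Otherwise every `G`-solution of `k lim` has a neighbourhood avoiding
all late test instances of one answer class; since there are at most two classes, the answer
can then be read off continuously from the `G`-solution, and `Q ≤*_W G`. Together with
`f ≤*_W f * g` and `g ≤*_W f * g` this gives `*`-irreducibility.
-/

open Set Filter Topology PiNat

section BaireTopology

lemma nhds_hasBasis_cylinder (x : Baire) : (𝓝 x).HasBasis (fun _ => True) (cylinder x) := by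
  refine ⟨fun s => ?_⟩
  rw [(isTopologicalBasis_cylinders fun _ => ℕ).mem_nhds_iff]
  constructor
  · rintro ⟨_, ⟨y, n, rfl⟩, hx, hs⟩
    exact ⟨n, trivial, by rwa [mem_cylinder_iff_eq.1 hx]⟩
  · rintro ⟨n, -, hs⟩
    exact ⟨_, ⟨x, n, rfl⟩, self_mem_cylinder x n, hs⟩

lemma continuousWithinAt_iff_cylinder {φ : Baire → Baire} {S : Set Baire} {x : Baire} :
    ContinuousWithinAt φ S x ↔
      ∀ m, ∃ n, ∀ y ∈ S, y ∈ cylinder x n → φ y ∈ cylinder (φ x) m := by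
  rw [ContinuousWithinAt, (nhdsWithin_hasBasis (nhds_hasBasis_cylinder x) S).tendsto_iff
    (nhds_hasBasis_cylinder (φ x))]
  simp only [true_implies, true_and, mem_inter_iff, and_imp]
  exact forall_congr' fun m => exists_congr fun n => ⟨fun h y hS hy => h y hy hS,
    fun h y hy hS => h y hS hy⟩

lemma continuousWithinAt_of_eq_on_cylinder {φ : Baire → Baire} {S : Set Baire} {x : Baire}
    {n : ℕ} (h : ∀ y ∈ S, y ∈ cylinder x n → φ y = φ x) : ContinuousWithinAt φ S x :=
  continuousWithinAt_iff_cylinder.2 fun m =>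
    ⟨n, fun y hS hy => (h y hS hy).symm ▸ self_mem_cylinder (φ x) m⟩

lemma initSeg_eq_of_mem_cylinder {x y : Baire} {m n : ℕ} (hy : y ∈ cylinder x n)
    (hmn : m ≤ n) : initSeg y m = initSeg x m :=
  List.map_inj_left.2 fun i hi => hy i ((List.mem_range.1 hi).trans_le hmn)

end BaireTopology

section Pairing

def pairFst (w : Baire) : Baire := fun n => w (2 * n)

def pairSnd (w : Baire) : Baire := fun n => w (2 * n + 1)

@[simp]
lemma pair_two_mul (x y : Baire) (n : ℕ) : pair x y (2 * n) = x n := by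
  simp [pair]

@[simp]
lemma pair_two_mul_add_one (x y : Baire) (n : ℕ) : pair x y (2 * n + 1) = y n := by
  simp [pair, Nat.add_mod, Nat.add_div]

@[simp]
lemma pairFst_pair (x y : Baire) : pairFst (pair x y) = x :=
  funext (pair_two_mul x y)

@[simp]
lemma pairSnd_pair (x y : Baire) : pairSnd (pair x y) = y :=
  funext (pair_two_mul_add_one x y)

lemma continuous_pairFst : Continuous pairFst := continuous_pi fun _ => continuous_apply _

lemma continuous_pairSnd : Continuous pairSnd := continuous_pi fun _ => continuous_apply _

lemma continuous_pair : Continuous fun q : Baire × Baire => pair q.1 q.2 := by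
  refine continuous_pi fun n => ?_
  by_cases h : n % 2 = 0 <;> simp only [pair, h, if_true, if_false] <;> fun_prop

lemma ContinuousOn.pair {φ ψ : Baire → Baire} {s : Set Baire} (hφ : ContinuousOn φ s)
    (hψ : ContinuousOn ψ s) : ContinuousOn (fun w => pair (φ w) (ψ w)) s :=
  continuous_pair.comp_continuousOn (hφ.prodMk hψ)

lemma pairFst_mem_cylinder {w x y : Baire} {n : ℕ} (h : w ∈ cylinder (pair x y) (2 * n)) :
    pairFst w ∈ cylinder x n := fun i hi => by
  simpa [pairFst] using h (2 * i) (by omega)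

lemma pairSnd_mem_cylinder {w x y : Baire} {n : ℕ} (h : w ∈ cylinder (pair x y) (2 * n)) :
    pairSnd w ∈ cylinder y n := fun i hi => by
  simpa [pairSnd] using h (2 * i + 1) (by omega)

end Pairing

section Reductions

lemma computableOn_reindex {r : ℕ → ℕ} (hr : Primrec r) (D : Set Baire) :
    ComputableOn (fun w n => w (r n)) D := by
  refine ⟨fun σ n => σ[r n]?,
    (Primrec.list_getElem?.comp Primrec.fst (hr.comp Primrec.snd)).to_comp, fun x _ n => ?_⟩
  have hseg : ∀ m, (initSeg x m)[r n]? = if r n < m then some (x (r n)) else none := by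
    intro m
    split_ifs with h <;> simp [initSeg, h]
  refine ⟨⟨r n + 1, by simp [hseg]⟩, fun m v hv => ?_⟩
  change (initSeg x m)[r n]? = some v at hv
  rw [hseg] at hv
  split_ifs at hv
  exact (Option.some_inj.1 hv).symm

lemma computableOn_id (D : Set Baire) : ComputableOn id D :=
  computableOn_reindex Primrec.id D

lemma computableOn_pairFst (D : Set Baire) : ComputableOn pairFst D :=
  computableOn_reindex Primrec.nat_double D

lemma computableOn_pairSnd (D : Set Baire) : ComputableOn pairSnd D :=
  computableOn_reindex Primrec.nat_double_succ D

lemma ComputableOn.continuousOn {F : Baire → Baire} {D : Set Baire} (hF : ComputableOn F D) :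
    ContinuousOn F D := by
  obtain ⟨φ, -, hφ⟩ := hF
  intro x hx
  refine continuousWithinAt_iff_cylinder.2 fun m => ?_
  choose use huse using fun i => (hφ x hx i).1
  refine ⟨(Finset.range m).sup use, fun y hy hyx i hi => ?_⟩
  have hseg : initSeg y (use i) = initSeg x (use i) :=
    initSeg_eq_of_mem_cylinder hyx (Finset.le_sup (Finset.mem_range.2 hi))
  exact ((hφ y hy i).2 _ _ (hseg ▸ huse i)).symm

lemma WRed.contWRed {f g : Problem} (h : WRed f g) : ContWRed f g := by
  obtain ⟨h, k, hk, hh, hred⟩ := h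
  exact ⟨h, k, hk.continuousOn, hh.continuousOn, hred⟩

lemma ContWRed.trans {a b c : Problem} (hab : ContWRed a b) (hbc : ContWRed b c) :
    ContWRed a c := by
  obtain ⟨h₁, k₁, hk₁, hh₁, hred₁⟩ := hab
  obtain ⟨h₂, k₂, hk₂, hh₂, hred₂⟩ := hbc
  set S := {w | ∃ x ∈ Dom a, ∃ z ∈ c (k₂ (k₁ x)), w = pair x z}
  have hS : ∀ w ∈ S, pairFst w ∈ Dom a := by
    rintro _ ⟨x, hx, z, -, rfl⟩
    simpa using hx
  have hmid : ContinuousOn (fun w => h₂ (pair (k₁ (pairFst w)) (pairSnd w))) S := by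
    refine hh₂.comp ((hk₁.comp continuous_pairFst.continuousOn hS).pair
      continuous_pairSnd.continuousOn) ?_
    rintro _ ⟨x, hx, z, hz, rfl⟩
    exact ⟨k₁ x, (hred₁ x hx).1, z, by simpa using hz, by simp⟩
  refine ⟨fun w => h₁ (pair (pairFst w) (h₂ (pair (k₁ (pairFst w)) (pairSnd w)))),
    fun x => k₂ (k₁ x), hk₂.comp hk₁ fun x hx => (hred₁ x hx).1, ?_, fun x hx => ?_⟩
  · refine hh₁.comp (continuous_pairFst.continuousOn.pair hmid) ?_
    rintro _ ⟨x, hx, z, hz, rfl⟩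
    exact ⟨x, hx, _, (hred₂ _ (hred₁ x hx).1).2 z hz, by simp⟩
  · refine ⟨(hred₂ _ (hred₁ x hx).1).1, fun z hz => ?_⟩
    simpa using (hred₁ x hx).2 _ ((hred₂ _ (hred₁ x hx).1).2 z hz)

lemma ContWRed.dom_nonempty {f g : Problem} (h : ContWRed f g) (hf : (Dom f).Nonempty) :
    (Dom g).Nonempty := by
  obtain ⟨_, k, _, _, hred⟩ := h
  obtain ⟨x, hx⟩ := hf
  exact ⟨k x, (hred x hx).1⟩

end Reductions

section Composition

variable {f g : Problem}

lemma mem_dom_pcomp_iff {x : Baire} : x ∈ Dom (pcomp f g) ↔ g x ⊆ Dom f ∧ (g x).Nonempty := by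
  refine ⟨fun ⟨_, hsub, y, hy, _⟩ => ⟨hsub, y, hy⟩, fun ⟨hsub, y, hy⟩ => ?_⟩
  obtain ⟨z, hz⟩ := hsub hy
  exact ⟨z, hsub, y, hy, hz⟩

lemma mem_pcomp {x y z : Baire} (hx : x ∈ Dom (pcomp f g)) (hy : y ∈ g x) (hz : z ∈ f y) :
    z ∈ pcomp f g x :=
  ⟨(mem_dom_pcomp_iff.1 hx).1, y, hy, hz⟩

lemma dom_nonempty_of_pcomp (h : (Dom (pcomp f g)).Nonempty) :
    (Dom f).Nonempty ∧ (Dom g).Nonempty := by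
  obtain ⟨x, hx⟩ := h
  obtain ⟨hsub, y, hy⟩ := mem_dom_pcomp_iff.1 hx
  exact ⟨⟨y, hsub hy⟩, ⟨x, y, hy⟩⟩

lemma pcomp_of_eq_singleton {x y : Baire} (h : g x = {y}) : pcomp f g x = f y := by
  ext z
  simp only [pcomp, h, singleton_subset_iff, mem_singleton_iff, exists_eq_left, mem_ofPred_eq]
  exact ⟨And.right, fun hz => ⟨⟨z, hz⟩, hz⟩⟩

lemma pcomp_eq_of_forall_eq_singleton {x : Baire} (hf : ∀ y ∈ g x, f y = {y}) :
    pcomp f g x = g x := by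
  ext z
  constructor
  · rintro ⟨-, y, hy, hz⟩
    rw [hf y hy, mem_singleton_iff] at hz
    rwa [hz]
  · exact fun hz => ⟨fun y hy => ⟨y, (hf y hy).symm ▸ rfl⟩, z, hz, (hf z hz).symm ▸ rfl⟩

/-- A computable stand-in for the identity below `q`: the instance `π u` of `q` comes with the
input, so that a fixed instance of `q` is needed only by a continuous forward map. -/
def guardedId (π : Baire → Baire) (q : Problem) : Problem := fun u => {v | v = u ∧ π u ∈ Dom q}

lemma guardedId_of_mem {π : Baire → Baire} {q : Problem} {u : Baire} (hu : π u ∈ Dom q) :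
    guardedId π q u = {u} := by
  ext v
  simp [guardedId, hu]

lemma wRed_guardedId {π : Baire → Baire} (hπ : ∀ D, ComputableOn π D) (q : Problem) :
    WRed (guardedId π q) q := by
  refine ⟨pairFst, π, hπ _, computableOn_pairFst _, fun u ⟨_, _, hu⟩ => ⟨hu, fun _ _ => ?_⟩⟩
  rw [pairFst_pair]
  exact ⟨rfl, hu⟩

def onSnd (f : Problem) : Problem := fun v => f (pairSnd v)

lemma wRed_onSnd (f : Problem) : WRed (onSnd f) f :=
  ⟨pairSnd, pairSnd, computableOn_pairSnd _, computableOn_pairSnd _,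
    fun _ hu => ⟨hu, fun y hy => by simpa [onSnd] using hy⟩⟩

def pairWithInput (g : Problem) : Problem := fun u => pair u '' g (pairSnd u)

lemma wRed_pairWithInput (g : Problem) : WRed (pairWithInput g) g :=
  ⟨id, pairSnd, computableOn_pairSnd _, computableOn_id _,
    fun _ ⟨_, y, hy, _⟩ => ⟨⟨y, hy⟩, fun _ hy => mem_image_of_mem _ hy⟩⟩

lemma IsCompProd.contWRed_left {p : Problem} (hp : IsCompProd f g p) (hg : (Dom g).Nonempty) :
    ContWRed f p := by
  obtain ⟨d, hd⟩ := hg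
  have hX := hp.2 _ _ (wRed_onSnd f) (wRed_guardedId computableOn_pairFst g)
  have hval : ∀ x, pcomp (onSnd f) (guardedId pairFst g) (pair d x) = f x := fun x => by
    rw [pcomp_of_eq_singleton (guardedId_of_mem (by rwa [pairFst_pair])), onSnd, pairSnd_pair]
  refine ContWRed.trans ⟨pairSnd, fun x => pair d x, ?_, continuous_pairSnd.continuousOn,
    fun x hx => ⟨show (pcomp _ _ _).Nonempty by rwa [hval], fun z hz => ?_⟩⟩ hX.contWRed
  · exact continuousOn_const.pair continuousOn_id
  · rw [hval] at hz
    simpa using hz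

lemma IsCompProd.contWRed_right {p : Problem} (hp : IsCompProd f g p) (hf : (Dom f).Nonempty) :
    ContWRed g p := by
  obtain ⟨e, he⟩ := hf
  have hX := hp.2 _ _ (wRed_guardedId (π := fun v => pairFst (pairFst v))
    (computableOn_reindex (Primrec.nat_double.comp Primrec.nat_double)) f) (wRed_pairWithInput g)
  have hval : ∀ x, pcomp (guardedId (fun v => pairFst (pairFst v)) f) (pairWithInput g)
      (pair e x) = pair (pair e x) '' g x := fun x => by
    have hsub : ∀ v ∈ pairWithInput g (pair e x), pairFst (pairFst v) ∈ Dom f := by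
      rintro _ ⟨y, -, rfl⟩
      simpa using he
    rw [pcomp_eq_of_forall_eq_singleton fun v hv => guardedId_of_mem (hsub v hv), pairWithInput,
      pairSnd_pair]
  refine ContWRed.trans ⟨fun w => pairSnd (pairSnd w), fun x => pair e x, ?_, ?_,
    fun x hx => ⟨show (pcomp _ _ _).Nonempty by rw [hval]; exact hx.image _, fun z hz => ?_⟩⟩
    hX.contWRed
  · exact continuousOn_const.pair continuousOn_id
  · exact (continuous_pairSnd.comp continuous_pairSnd).continuousOn
  · rw [hval] at hz
    obtain ⟨y, hy, rfl⟩ := hz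
    simpa using hy

end Composition

section StarIrreducible

def IsStarIrreducible (Q : Problem) : Prop :=
  ∀ f g p : Problem, IsCompProd f g p → ContWEquiv Q p → ContWEquiv Q f ∨ ContWEquiv Q g

def SplitsCompositions (Q : Problem) : Prop :=
  ∀ F G : Problem, ContWRed Q (pcomp F G) → ContWRed Q F ∨ ContWRed Q G

lemma SplitsCompositions.isStarIrreducible {Q : Problem} (hsplit : SplitsCompositions Q)
    (hQ : (Dom Q).Nonempty) : IsStarIrreducible Q := by
  rintro f g p hp ⟨hQp, hpQ⟩
  obtain ⟨f₀, g₀, hf₀, hg₀, hpfg⟩ := hp.1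
  have hQfg : ContWRed Q (pcomp f₀ g₀) := hQp.trans hpfg.1.contWRed
  obtain ⟨hdf₀, hdg₀⟩ := dom_nonempty_of_pcomp (hQfg.dom_nonempty hQ)
  rcases hsplit f₀ g₀ hQfg with hf | hg
  · exact Or.inl ⟨hf.trans hf₀.contWRed,
      (hp.contWRed_left (hg₀.contWRed.dom_nonempty hdg₀)).trans hpQ⟩
  · exact Or.inr ⟨hg.trans hg₀.contWRed,
      (hp.contWRed_right (hf₀.contWRed.dom_nonempty hdf₀)).trans hpQ⟩

end StarIrreducible

section FirstHit

variable {p : ℕ → Prop} {x y : Baire} {j : ℕ}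

def FirstHit (p : ℕ → Prop) (x : Baire) (j : ℕ) : Prop := p (x j) ∧ ∀ i < j, ¬ p (x i)

lemma firstHit_or_forall_not (p : ℕ → Prop) (x : Baire) :
    (∃ j, FirstHit p x j) ∨ ∀ n, ¬ p (x n) := by
  classical
  by_cases h : ∃ n, p (x n)
  · exact Or.inl ⟨Nat.find h, Nat.find_spec h, fun i hi => Nat.find_min h hi⟩
  · exact Or.inr (not_exists.1 h)

lemma FirstHit.of_mem_cylinder (h : FirstHit p x j) (hy : y ∈ cylinder x (j + 1)) :
    FirstHit p y j :=
  ⟨hy j j.lt_succ_self ▸ h.1, fun i hi => hy i (hi.trans j.lt_succ_self) ▸ h.2 i hi⟩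

lemma FirstHit.le_of_mem_cylinder {m : ℕ} (h : FirstHit p y j) (hx : ∀ n, ¬ p (x n))
    (hy : y ∈ cylinder x m) : m ≤ j :=
  le_of_not_gt fun hjm => hx j (hy j hjm ▸ h.1)

noncomputable def selectFirst (p : ℕ → Prop) (sel : ℕ → Baire) (dflt x : Baire) : Baire :=
  open Classical in if h : ∃ n, p (x n) then sel (Nat.find h) else dflt

variable {sel : ℕ → Baire} {dflt : Baire}

lemma FirstHit.selectFirst_eq (h : FirstHit p x j) : selectFirst p sel dflt x = sel j := by
  classical
  rw [selectFirst, dif_pos ⟨j, h.1⟩]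
  exact congrArg sel ((Nat.find_eq_iff _).2 ⟨h.1, h.2⟩)

lemma selectFirst_of_forall_not (h : ∀ n, ¬ p (x n)) : selectFirst p sel dflt x = dflt := by
  rw [selectFirst, dif_neg (not_exists.2 h)]

lemma continuous_selectFirst (hsel : ∀ j, sel j ∈ cylinder dflt j) :
    Continuous (selectFirst p sel dflt) := by
  refine continuous_iff_continuousAt.2 fun x => continuousWithinAt_univ _ _ |>.1 ?_
  rcases firstHit_or_forall_not p x with ⟨j, hj⟩ | hx
  · exact continuousWithinAt_of_eq_on_cylinder fun y _ hy => by
      rw [(hj.of_mem_cylinder hy).selectFirst_eq, hj.selectFirst_eq]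
  · refine continuousWithinAt_iff_cylinder.2 fun m => ⟨m, fun y _ hy => ?_⟩
    rw [selectFirst_of_forall_not hx]
    rcases firstHit_or_forall_not p y with ⟨j, hj⟩ | hy'
    · rw [hj.selectFirst_eq]
      exact cylinder_anti dflt (hj.le_of_mem_cylinder hx hy) (hsel j)
    · rw [selectFirst_of_forall_not hy']
      exact self_mem_cylinder dflt m

end FirstHit

section Splitting

def ContWRedBy (f g : Problem) (h k : Baire → Baire) : Prop :=
  ContinuousOn k (Dom f) ∧ ContinuousOn h {w | ∃ x ∈ Dom f, ∃ y ∈ g (k x), w = pair x y} ∧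
    ∀ x ∈ Dom f, k x ∈ Dom g ∧ ∀ y ∈ g (k x), h (pair x y) ∈ f x

lemma contWRed_left_of_section {Q F G : Problem} {h k ψ κ : Baire → Baire}
    (hred : ContWRedBy Q (pcomp F G) h k) (hψ : Continuous ψ) (hκ : Continuous κ)
    (hψQ : ∀ x ∈ Dom Q, ψ x ∈ Dom Q ∧ Q (ψ x) ⊆ Q x) (hκG : ∀ x ∈ Dom Q, κ x ∈ G (k (ψ x))) :
    ContWRed Q F := by
  obtain ⟨-, hh, hkQ⟩ := hred
  have hmem : ∀ x ∈ Dom Q, ∀ z ∈ F (κ x), z ∈ pcomp F G (k (ψ x)) := fun x hx z hz =>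
    mem_pcomp (hkQ _ (hψQ x hx).1).1 (hκG x hx) hz
  refine ⟨fun w => h (pair (ψ (pairFst w)) (pairSnd w)), κ, hκ.continuousOn, ?_,
    fun x hx => ⟨(mem_dom_pcomp_iff.1 (hkQ _ (hψQ x hx).1).1).1 (hκG x hx), fun z hz => ?_⟩⟩
  · refine hh.comp ((hψ.comp continuous_pairFst).continuousOn.pair
      continuous_pairSnd.continuousOn) ?_
    rintro _ ⟨x, hx, z, hz, rfl⟩
    exact ⟨ψ x, (hψQ x hx).1, z, by simpa using hmem x hx z hz, by simp⟩
  · simpa using (hψQ x hx).2 ((hkQ _ (hψQ x hx).1).2 z (hmem x hx z hz))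

def Avoids (T : ℕ → Set Baire) (ans : ℕ → Baire) (j : ℕ) (y : Baire) : Prop :=
  ∀ i, j ≤ i → ans i = ans j → Disjoint (T i) (cylinder y j)

lemma avoids_congr {T : ℕ → Set Baire} {ans : ℕ → Baire} {j : ℕ} {y y' : Baire}
    (hy : y' ∈ cylinder y j) : Avoids T ans j y' ↔ Avoids T ans j y := by
  rw [Avoids, Avoids, mem_cylinder_iff_eq.1 hy]

noncomputable def avoidAnswer (T : ℕ → Set Baire) (ans a : ℕ → Baire) (y : Baire) : Baire :=
  open Classical in if h : ∃ j, Avoids T ans j y then a (Nat.find h) else a 0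

lemma avoidAnswer_eq_of_mem_cylinder {T : ℕ → Set Baire} {ans a : ℕ → Baire} {j : ℕ}
    {y y' : Baire} (hj : Avoids T ans j y) (hmin : ∀ i < j, ¬ Avoids T ans i y)
    (hy : y' ∈ cylinder y j) : avoidAnswer T ans a y' = a j := by
  classical
  have hcongr : ∀ i ≤ j, Avoids T ans i y' ↔ Avoids T ans i y := fun i hi =>
    avoids_congr (cylinder_anti y hi hy)
  have h' : ∃ j, Avoids T ans j y' := ⟨j, (hcongr j le_rfl).2 hj⟩
  rw [avoidAnswer, dif_pos h']
  exact congrArg a ((Nat.find_eq_iff h').2 ⟨(hcongr j le_rfl).2 hj,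
    fun i hi hav => hmin i hi ((hcongr i hi.le).1 hav)⟩)

/-- Near a `G`-solution of `k lim` only late test instances answered by `a j` occur, so this
backward map is locally constant. -/
lemma continuousOn_avoidAnswer {Q G : Problem} {p : ℕ → Prop} {lim : Baire}
    {test ans a : ℕ → Baire} {k : Baire → Baire}
    (ha : ∀ j i, ans i ≠ ans j → ans i = a j)
    (havoid : ∀ y ∈ G (k lim), ∃ j, Avoids (fun i => G (k (test i))) ans j y) :
    ContinuousOn
      (fun w => selectFirst p ans (avoidAnswer (fun i => G (k (test i))) ans a (pairSnd w))
        (pairFst w))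
      {w | ∃ x ∈ Dom Q, ∃ y ∈ G (k (selectFirst p test lim x)), w = pair x y} := by
  classical
  rintro _ ⟨x, -, y, hy, rfl⟩
  rcases firstHit_or_forall_not p x with ⟨j, hj⟩ | hx₀
  · refine continuousWithinAt_of_eq_on_cylinder (n := 2 * (j + 1)) fun w _ hw => ?_
    simp only [pairFst_pair, hj.selectFirst_eq,
      (hj.of_mem_cylinder (pairFst_mem_cylinder hw)).selectFirst_eq]
  rw [selectFirst_of_forall_not hx₀] at hy
  have hex := havoid y hy
  have hj := Nat.find_spec hex
  have hmin : ∀ i < Nat.find hex, ¬ Avoids (fun i => G (k (test i))) ans i y :=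
    fun i hi => Nat.find_min hex hi
  refine continuousWithinAt_of_eq_on_cylinder (n := 2 * Nat.find hex) ?_
  rintro _ ⟨x', -, y', hy', rfl⟩ hw
  have hx' := pairFst_mem_cylinder hw
  have hy'c := pairSnd_mem_cylinder hw
  simp only [pairFst_pair, pairSnd_pair] at hx' hy'c ⊢
  rw [selectFirst_of_forall_not hx₀, avoidAnswer_eq_of_mem_cylinder hj hmin (self_mem_cylinder _ _)]
  rcases firstHit_or_forall_not p x' with ⟨i, hi⟩ | hx'₀
  · rw [hi.selectFirst_eq] at hy' ⊢
    refine ha _ _ fun hans => ?_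
    exact disjoint_left.1 (hj i (hi.le_of_mem_cylinder hx₀ hx') hans) hy' hy'c
  · rw [selectFirst_of_forall_not hx'₀, avoidAnswer_eq_of_mem_cylinder hj hmin hy'c]

end Splitting

/-- `ans j` solves the instances first satisfying `p` at position `j`, and the solutions at `lim`
solve those never satisfying `p`. The instances `test j` first satisfy `p` at `j` and converge
to `lim`; the answers form at most two classes, and the class other than that of `ans j` is a
single solution at `lim`. -/
structure IsFirstHitProblem (Q : Problem) (p : ℕ → Prop) (lim : Baire) (test ans : ℕ → Baire) :
    Prop where
  lim_mem_dom : lim ∈ Dom Q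
  test_mem_dom : ∀ j, test j ∈ Dom Q
  not_lim : ∀ n, ¬ p (lim n)
  test_mem_cylinder : ∀ j, test j ∈ cylinder lim j
  test_self : ∀ j, p (test j j)
  subset_test : ∀ j, Q (test j) ⊆ {ans j}
  ans_mem : ∀ x ∈ Dom Q, ∀ j, FirstHit p x j → ans j ∈ Q x
  subset_lim : ∀ x ∈ Dom Q, (∀ n, ¬ p (x n)) → Q lim ⊆ Q x
  exists_other_ans : ∀ j, ∃ a ∈ Q lim, ∀ i, ans i ≠ ans j → ans i = a

namespace IsFirstHitProblem

variable {Q F G : Problem} {p : ℕ → Prop} {lim : Baire} {test ans : ℕ → Baire}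
  {h k : Baire → Baire}

lemma continuous_selectFirst_test (hQ : IsFirstHitProblem Q p lim test ans) {σ : ℕ → ℕ}
    (hσ : ∀ j, j ≤ σ j) : Continuous (selectFirst p (fun j => test (σ j)) lim) :=
  continuous_selectFirst fun j => cylinder_anti lim (hσ j) (hQ.test_mem_cylinder (σ j))

lemma selectFirst_test_mem (hQ : IsFirstHitProblem Q p lim test ans) {σ : ℕ → ℕ}
    (hσ : ∀ j, ans (σ j) = ans j) {x : Baire} (hx : x ∈ Dom Q) :
    selectFirst p (fun j => test (σ j)) lim x ∈ Dom Q ∧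
      Q (selectFirst p (fun j => test (σ j)) lim x) ⊆ Q x := by
  rcases firstHit_or_forall_not p x with ⟨j, hj⟩ | hx₀
  · rw [hj.selectFirst_eq]
    refine ⟨hQ.test_mem_dom _, fun z hz => ?_⟩
    rw [mem_singleton_iff.1 (hQ.subset_test _ hz), hσ]
    exact hQ.ans_mem x hx j hj
  · rw [selectFirst_of_forall_not hx₀]
    exact ⟨hQ.lim_mem_dom, hQ.subset_lim x hx hx₀⟩

/-- If `y₀` is a limit of solutions of late test instances of every answer class, choosing
those solutions along the first hit gives a continuous section converging to `y₀`. -/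
lemma contWRed_left_of_not_avoids (hQ : IsFirstHitProblem Q p lim test ans)
    (hred : ContWRedBy Q (pcomp F G) h k) {y₀ : Baire} (hy₀ : y₀ ∈ G (k lim))
    (hmerge : ∀ j, ¬ Avoids (fun i => G (k (test i))) ans j y₀) : ContWRed Q F := by
  simp only [Avoids, not_forall, not_disjoint_iff, exists_prop] at hmerge
  choose σ hσ hσans s hs hsy₀ using hmerge
  refine contWRed_left_of_section hred (hQ.continuous_selectFirst_test hσ)
    (continuous_selectFirst (p := p) hsy₀)
    (fun x hx => hQ.selectFirst_test_mem hσans hx) fun x _ => ?_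
  rcases firstHit_or_forall_not p x with ⟨j, hj⟩ | hx₀
  · rw [hj.selectFirst_eq, hj.selectFirst_eq]
    exact hs j
  · rw [selectFirst_of_forall_not hx₀, selectFirst_of_forall_not hx₀]
    exact hy₀

lemma contWRed_right_of_avoids (hQ : IsFirstHitProblem Q p lim test ans)
    (hred : ContWRedBy Q (pcomp F G) h k)
    (havoid : ∀ y ∈ G (k lim), ∃ j, Avoids (fun i => G (k (test i))) ans j y) :
    ContWRed Q G := by
  obtain ⟨hk, -, hkQ⟩ := hred
  choose a haQ ha using hQ.exists_other_ans
  have hψ : ∀ x ∈ Dom Q, selectFirst p test lim x ∈ Dom Q ∧ Q (selectFirst p test lim x) ⊆ Q x :=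
    fun x hx => hQ.selectFirst_test_mem (σ := id) (fun _ => rfl) hx
  refine ⟨_, fun x => k (selectFirst p test lim x),
    hk.comp (hQ.continuous_selectFirst_test (σ := id) fun _ => le_rfl).continuousOn
      fun x hx => (hψ x hx).1,
    continuousOn_avoidAnswer ha havoid, fun x hx =>
      ⟨(mem_dom_pcomp_iff.1 (hkQ _ (hψ x hx).1).1).2, fun y hy => ?_⟩⟩
  simp only [pairFst_pair, pairSnd_pair]
  rcases firstHit_or_forall_not p x with ⟨j, hj⟩ | hx₀
  · rw [hj.selectFirst_eq]
    exact hQ.ans_mem x hx j hj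
  · classical
    simp only at hy
    rw [selectFirst_of_forall_not hx₀] at hy ⊢
    have hex := havoid y hy
    rw [avoidAnswer_eq_of_mem_cylinder (Nat.find_spec hex) (fun i hi => Nat.find_min hex hi)
      (self_mem_cylinder _ _)]
    exact hQ.subset_lim x hx hx₀ (haQ _)

theorem splitsCompositions (hQ : IsFirstHitProblem Q p lim test ans) : SplitsCompositions Q := by
  rintro F G ⟨h, k, hred⟩
  by_cases havoid : ∀ y ∈ G (k lim), ∃ j, Avoids (fun i => G (k (test i))) ans j y
  · exact Or.inr (hQ.contWRed_right_of_avoids hred havoid)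
  · push Not at havoid
    obtain ⟨y₀, hy₀, hmerge⟩ := havoid
    exact Or.inl (hQ.contWRed_left_of_not_avoids hred hy₀ hmerge)

theorem isStarIrreducible (hQ : IsFirstHitProblem Q p lim test ans) : IsStarIrreducible Q :=
  hQ.splitsCompositions.isStarIrreducible ⟨lim, hQ.lim_mem_dom⟩

end IsFirstHitProblem

lemma isFirstHitProblem_lpo :
    IsFirstHitProblem LPO (· = 0) (cseq 1) (fun j => Function.update (cseq 1) j 0)
      (fun _ => cseq 0) where
  lim_mem_dom := ⟨cseq 1, Or.inr ⟨fun _ => one_ne_zero, rfl⟩⟩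
  test_mem_dom j := ⟨cseq 0, Or.inl ⟨⟨j, Function.update_self ..⟩, rfl⟩⟩
  not_lim _ := one_ne_zero
  test_mem_cylinder _ _ hi := Function.update_of_ne hi.ne _ _
  test_self _ := Function.update_self ..
  subset_test j := by
    rintro y (⟨-, rfl⟩ | ⟨hne, -⟩)
    · rfl
    · exact absurd (Function.update_self ..) (hne j)
  ans_mem _ _ j hj := Or.inl ⟨⟨j, hj.1⟩, rfl⟩
  subset_lim x _ hx := by
    rintro y (⟨⟨n, hn⟩, -⟩ | ⟨-, rfl⟩)
    · exact absurd hn one_ne_zero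
    · exact Or.inr ⟨hx, rfl⟩
  exists_other_ans _ := ⟨cseq 1, Or.inr ⟨fun _ => one_ne_zero, rfl⟩, fun _ h => absurd rfl h⟩

lemma llpoAns_mem {x : Baire} (hx : ∀ i j, x i ≠ 0 → x j ≠ 0 → i = j) {j : ℕ} (hj : x j ≠ 0) :
    (if Even j then cseq 1 else cseq 0) ∈ LLPO x := by
  refine ⟨hx, ?_⟩
  split_ifs with hev
  · exact Or.inr ⟨rfl, fun i hi => not_not.1 fun h =>
      Nat.not_even_iff_odd.2 hi (hx i j h hj ▸ hev)⟩
  · exact Or.inl ⟨rfl, fun i hi => not_not.1 fun h => hev (hx i j h hj ▸ hi)⟩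

lemma isFirstHitProblem_llpo :
    IsFirstHitProblem LLPO (· ≠ 0) (cseq 0) (fun j => Function.update (cseq 0) j 1)
      (fun j => if Even j then cseq 1 else cseq 0) where
  lim_mem_dom := ⟨cseq 0, fun _ _ h => absurd rfl h, Or.inl ⟨rfl, fun _ _ => rfl⟩⟩
  test_mem_dom j := by
    have hone : ∀ i, Function.update (cseq 0) j 1 i ≠ 0 → i = j := fun i hi =>
      not_not.1 fun hij => hi (Function.update_of_ne hij _ _)
    exact ⟨_, llpoAns_mem (fun i i' hi hi' => (hone i hi).trans (hone i' hi').symm)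
      (j := j) (by simp)⟩
  not_lim _ h := h rfl
  test_mem_cylinder _ _ hi := Function.update_of_ne hi.ne _ _
  test_self _ := by simp
  subset_test j := by
    rintro y ⟨-, ⟨rfl, h⟩ | ⟨rfl, h⟩⟩ <;> split_ifs with hev
    · simpa using h j hev
    · rfl
    · rfl
    · simpa using h j (Nat.not_even_iff_odd.1 hev)
  ans_mem _ hx _ hj := llpoAns_mem (hx.some_mem.1) hj.1
  subset_lim x _ hx := by
    rw [show x = cseq 0 from funext fun n => not_not.1 (hx n)]
  exists_other_ans j := by
    refine ⟨if Even j then cseq 0 else cseq 1, ?_, fun i h => ?_⟩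
    · refine ⟨fun _ _ h => absurd rfl h, ?_⟩
      split_ifs
      exacts [Or.inl ⟨rfl, fun _ _ => rfl⟩, Or.inr ⟨rfl, fun _ _ => rfl⟩]
    · split_ifs at h ⊢ <;> first | rfl | exact absurd rfl h

/-- `LPO` and `LLPO` are `*`-irreducible with respect to continuous Weihrauch degrees. -/
theorem lpo_llpo_star_irreducible :
    (∀ f g p : Problem, IsCompProd f g p → ContWEquiv LPO p →
      ContWEquiv LPO f ∨ ContWEquiv LPO g) ∧
    (∀ f g p : Problem, IsCompProd f g p → ContWEquiv LLPO p →
      ContWEquiv LLPO f ∨ ContWEquiv LLPO g) :=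
  ⟨isFirstHitProblem_lpo.isStarIrreducible, isFirstHitProblem_llpo.isStarIrreducible⟩
end

section
/- For every n ≥ 1, the problem LPO^n (the product of n copies of LPO) is not n-continuous: there is no realizer r of LPO^n together with a partition P of dom(r) with |P| ≤ n such that r restricted to each element of P is continuous. -/
/-! ### Auxiliary machinery for the proof -/

noncomputable section LPOAux

open Classical in
/-- The unique LPO answer. -/
noncomputable def lpoAns (x : Baire) : Baire :=
  if ∃ m, x m = 0 then cseq 0 else cseq 1

def leftP (z : Baire) : Baire := fun m => z (2 * m)
def rightP (z : Baire) : Baire := fun m => z (2 * m + 1)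

lemma leftP_pair (x y : Baire) : leftP (pair x y) = x := by
  funext m
  have h1 : (2 * m) % 2 = 0 := by omega
  have h2 : (2 * m) / 2 = m := by omega
  simp [leftP, pair, h1, h2]

lemma rightP_pair (x y : Baire) : rightP (pair x y) = y := by
  funext m
  have h1 : (2 * m + 1) % 2 = 1 := by omega
  have h2 : (2 * m + 1) / 2 = m := by omega
  simp [rightP, pair, h1, h2]

lemma pair_leftP_rightP (z : Baire) : pair (leftP z) (rightP z) = z := by
  funext p
  by_cases h : p % 2 = 0
  · have h2 : 2 * (p / 2) = p := by omega
    simp [pair, leftP, h, h2]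
  · have h2 : 2 * (p / 2) + 1 = p := by omega
    simp [pair, rightP, h, h2]

lemma lpoAns_mem (z : Baire) : lpoAns z ∈ LPO z := by
  unfold lpoAns
  by_cases h : ∃ m, z m = 0
  · rw [if_pos h]; exact Or.inl ⟨h, rfl⟩
  · rw [if_neg h]; push_neg at h; exact Or.inr ⟨h, rfl⟩

lemma lpo_unique {z u : Baire} (hu : u ∈ LPO z) : u = lpoAns z := by
  unfold lpoAns
  rcases hu with ⟨h, rfl⟩ | ⟨h, rfl⟩
  · rw [if_pos h]
  · rw [if_neg (by push_neg; exact h)]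

/-- The unique answer of `powP LPO n`. -/
noncomputable def ansP : ℕ → Baire → Baire
  | 0, z => z
  | 1, z => lpoAns z
  | n + 2, z => pair (lpoAns (leftP z)) (ansP (n + 1) (rightP z))

lemma ansP_mem : ∀ (n : ℕ) (z : Baire), ansP (n + 1) z ∈ powP LPO (n + 1) z := by
  intro n
  induction n with
  | zero => intro z; exact lpoAns_mem z
  | succ n ih =>
    intro z
    refine ⟨leftP z, rightP z, lpoAns (leftP z), ansP (n + 1) (rightP z),
      (pair_leftP_rightP z).symm, rfl, lpoAns_mem _, ih _⟩

lemma powP_unique : ∀ (n : ℕ) (z u : Baire), u ∈ powP LPO (n + 1) z → u = ansP (n + 1) z := by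
  intro n
  induction n with
  | zero => intro z u hu; exact lpo_unique hu
  | succ n ih =>
    rintro z u ⟨x, y, a, b, rfl, rfl, ha, hb⟩
    show pair a b = ansP (n + 2) (pair x y)
    show pair a b = pair (lpoAns (leftP (pair x y))) (ansP (n + 1) (rightP (pair x y)))
    rw [leftP_pair, rightP_pair, ← lpo_unique ha, ← ih y b hb]

/-- The `j`-th coordinate projection of a nested `n`-fold pairing. -/
def coordP : ℕ → ℕ → Baire → Baire
  | 0, _, z => z
  | 1, _, z => z
  | _ + 2, 0, z => leftP z
  | n + 2, j + 1, z => coordP (n + 1) j (rightP z)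

lemma ansP_apply : ∀ (n j : ℕ), j < n + 1 → ∀ z : Baire,
    ansP (n + 1) z (2 ^ j - 1) = lpoAns (coordP (n + 1) j z) 0 := by
  intro n
  induction n with
  | zero =>
    intro j hj z
    interval_cases j
    rfl
  | succ n ih =>
    intro j hj z
    match j with
    | 0 => rfl
    | j + 1 =>
      have h1 : 1 ≤ 2 ^ j := Nat.one_le_two_pow
      have hkey : 2 ^ (j + 1) - 1 = 2 * (2 ^ j - 1) + 1 := by
        have : 2 ^ (j + 1) = 2 * 2 ^ j := by ring
        omega
      have hodd : (2 ^ (j + 1) - 1) % 2 = 1 := by omega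
      have hdiv : (2 ^ (j + 1) - 1) / 2 = 2 ^ j - 1 := by omega
      show pair (lpoAns (leftP z)) (ansP (n + 1) (rightP z)) (2 ^ (j + 1) - 1) = _
      rw [show pair (lpoAns (leftP z)) (ansP (n + 1) (rightP z)) (2 ^ (j + 1) - 1)
            = ansP (n + 1) (rightP z) (2 ^ j - 1) by simp [pair, hodd, hdiv]]
      exact ih j (by omega) (rightP z)

/-- Nested `n`-fold pairing of a family of sequences. -/
def nestP : ℕ → (ℕ → Baire) → Baire
  | 0, w => w 0
  | 1, w => w 0
  | n + 2, w => pair (w 0) (nestP (n + 1) (fun k => w (k + 1)))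

lemma coordP_nestP : ∀ (n j : ℕ), j < n + 1 → ∀ w : ℕ → Baire,
    coordP (n + 1) j (nestP (n + 1) w) = w j := by
  intro n
  induction n with
  | zero =>
    intro j hj w
    interval_cases j
    rfl
  | succ n ih =>
    intro j hj w
    match j with
    | 0 => exact leftP_pair _ _
    | j + 1 =>
      show coordP (n + 1) j (rightP (pair (w 0) (nestP (n + 1) fun k => w (k + 1)))) = _
      rw [rightP_pair]
      exact ih j (by omega) _

lemma nestP_agree : ∀ (n : ℕ) (w w' : ℕ → Baire) (p : ℕ),
    (∀ k m, k < n + 1 → m ≤ p → w k m = w' k m) →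
    nestP (n + 1) w p = nestP (n + 1) w' p := by
  intro n
  induction n with
  | zero => intro w w' p h; exact h 0 p (by omega) le_rfl
  | succ n ih =>
    intro w w' p h
    show pair (w 0) (nestP (n + 1) fun k => w (k + 1)) p
       = pair (w' 0) (nestP (n + 1) fun k => w' (k + 1)) p
    by_cases hp : p % 2 = 0
    · simp only [pair, if_pos hp]
      exact h 0 (p / 2) (by omega) (Nat.div_le_self _ _)
    · simp only [pair, if_neg hp]
      exact ih _ _ (p / 2) fun k m hk hm =>
        h (k + 1) m (by omega) (le_trans hm (Nat.div_le_self _ _))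

/-- Local modulus of continuity on a piece, in Baire space. -/
lemma modulusLem {S : Set Baire} {r : Baire → Baire} (h : ContinuousOn r S)
    {x : Baire} (hx : x ∈ S) (p : ℕ) :
    ∃ m, ∀ y ∈ S, (∀ q < m, y q = x q) → r y p = r x p := by
  have hc : Filter.Tendsto r (nhdsWithin x S) (nhds (r x)) := h x hx
  have hV : (fun g : Baire => g p) ⁻¹' {r x p} ∈ nhds (r x) := by
    have hop : IsOpen ((fun g : Baire => g p) ⁻¹' {r x p}) :=
      (isOpen_discrete ({r x p} : Set ℕ)).preimage (continuous_apply p)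
    exact hop.mem_nhds rfl
  have hm := hc hV
  rw [Filter.mem_map, mem_nhdsWithin] at hm
  obtain ⟨U, hU, hxU, hsub⟩ := hm
  rw [isOpen_pi_iff] at hU
  obtain ⟨I, u, hu, hIsub⟩ := hU x hxU
  refine ⟨I.sup id + 1, fun y hyS hag => ?_⟩
  have hyU : y ∈ U := by
    apply hIsub
    intro a ha
    have : a ≤ I.sup id := Finset.le_sup (f := id) ha
    rw [hag a (by omega)]
    exact (hu a ha).2
  exact hsub ⟨hyU, hyS⟩

end LPOAux

/-- For every `n ≥ 1`, the product `LPO^n` of `n` copies of `LPO` is not `n`-continuous. -/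
theorem lpo_pow_not_n_continuous (n : ℕ) (hn : 1 ≤ n) :
    ¬ kContinuous n (powP LPO n) := by
  rintro ⟨D, r, c, hD, hr, hcont⟩
  obtain ⟨N, rfl⟩ : ∃ N, n = N + 1 := ⟨n - 1, by omega⟩
  have hdom : ∀ z : Baire, z ∈ Dom (powP LPO (N + 1)) :=
    fun z => ⟨ansP (N + 1) z, ansP_mem N z⟩
  have hDall : ∀ z : Baire, z ∈ D := fun z => hD (hdom z)
  have hrz : ∀ z : Baire, r z = ansP (N + 1) z :=
    fun z => powP_unique N z _ (hr z (hdom z))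
  -- moduli of continuity
  have hmod0 : ∀ (x : Baire) (p : ℕ), ∃ m, ∀ y : Baire, c y = c x →
      (∀ q < m, y q = x q) → r y p = r x p := by
    intro x p
    obtain ⟨m, hm⟩ := modulusLem (hcont (c x))
      (show x ∈ {x ∈ D | c x = c x} from ⟨hDall x, rfl⟩) p
    exact ⟨m, fun y hyc hag => hm y ⟨hDall y, hyc⟩ hag⟩
  choose mod hmod using hmod0
  -- the fooling points
  set W : ℕ → (ℕ → ℕ) → ℕ → Baire :=
    fun j t k m => if k < j ∧ m = t k then 0 else 1 with hW
  set X : ℕ → (ℕ → ℕ) → Baire := fun j t => nestP (N + 1) (W j t) with hX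
  -- recursive construction of the zero positions
  have key : ∀ j : ℕ, ∃ t : ℕ → ℕ,
      (∀ i, i < j → mod (X i t) (2 ^ i - 1) ≤ t i) ∧
      (∀ i k, i ≤ k → k < j → t i ≤ t k) := by
    intro j
    induction j with
    | zero => exact ⟨fun _ => 0, fun i hi => absurd hi (by omega), fun i k _ hk => absurd hk (by omega)⟩
    | succ j ih =>
      obtain ⟨t, h1, h2⟩ := ih
      set v := max (mod (X j t) (2 ^ j - 1)) ((Finset.range j).sup t) with hv
      set t' := Function.update t j v with ht'
      have htlt : ∀ k, k ≠ j → t' k = t k := fun k hk => Function.update_of_ne hk _ _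
      have htj : t' j = v := Function.update_self _ _ _
      have hXeq : ∀ i, i ≤ j → X i t' = X i t := by
        intro i hij
        simp only [hX]
        have : W i t' = W i t := by
          funext k m
          simp only [hW]
          by_cases hk : k < i
          · rw [htlt k (by omega)]
          · simp [hk]
        rw [this]
      refine ⟨t', ?_, ?_⟩
      · intro i hi
        by_cases hij : i = j
        · subst hij
          rw [hXeq i le_rfl, htj]
          exact le_max_left _ _
        · rw [hXeq i (by omega), htlt i hij]
          exact h1 i (by omega)
      · intro i k hik hk
        by_cases hkj : k = j
        · subst hkj
          by_cases hij : i = k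
          · subst hij; exact le_rfl
          · rw [htlt i hij, htj]
            exact le_trans (Finset.le_sup (f := t) (Finset.mem_range.mpr (by omega)))
              (le_max_right _ _)
        · rw [htlt i (by omega), htlt k hkj]
          exact h2 i k hik (by omega)
  obtain ⟨t, h1, h2⟩ := key (N + 1)
  -- distinct colors along the chain
  have hcol : ∀ i i' : ℕ, i < i' → i' ≤ N + 1 → c (X i' t) ≠ c (X i t) := by
    intro i i' hii hi' hcc
    have hp : r (X i' t) (2 ^ i - 1) = r (X i t) (2 ^ i - 1) := by
      apply hmod (X i t) (2 ^ i - 1) (X i' t) hcc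
      intro q hq
      have hqt : q < t i := lt_of_lt_of_le hq (h1 i (by omega))
      simp only [hX]
      apply nestP_agree
      intro k m hk hm
      simp only [hW]
      by_cases hm' : m = t k
      · by_cases hki : k < i
        · simp [hki, hm', show k < i' by omega]
        · exfalso
          have : t i ≤ t k := h2 i k (by omega) (by omega)
          omega
      · simp [hm']
    have hv1 : r (X i t) (2 ^ i - 1) = 1 := by
      rw [hrz, ansP_apply N i (by omega), hX, coordP_nestP N i (by omega)]
      have hne : ¬ ∃ m, W i t i m = 0 := by
        rintro ⟨m, hm⟩
        simp only [hW] at hm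
        rw [if_neg (by omega)] at hm
        exact one_ne_zero hm
      rw [lpoAns, if_neg hne]
      rfl
    have hv0 : r (X i' t) (2 ^ i - 1) = 0 := by
      rw [hrz, ansP_apply N i (by omega), hX, coordP_nestP N i (by omega)]
      have hex : ∃ m, W i' t i m = 0 := ⟨t i, by simp [hW, hii]⟩
      rw [lpoAns, if_pos hex]
      rfl
    rw [hv0, hv1] at hp
    exact absurd hp (by omega)
  -- pigeonhole
  have hinj : Function.Injective (fun i : Fin (N + 2) => c (X i.1 t)) := by
    intro a b hab
    by_contra hne
    have hne' : a.1 ≠ b.1 := fun h => hne (Fin.ext h)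
    rcases Nat.lt_or_ge a.1 b.1 with hlt | hge
    · exact hcol a.1 b.1 hlt (by omega) hab.symm
    · exact hcol b.1 a.1 (by omega) (by omega) hab
  have := Fintype.card_le_of_injective _ hinj
  simp only [Fintype.card_fin] at this
  omega
end
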